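/- arXiv:1703.08796 — 2 statements merged into one kernel-verified Lean document; each statement's English description precedes it below -/
import Mathlib

section
/- Nonnegativity of the Allen-Cahn quadratic form: for all ζ ∈ H¹(ℝ), ∫_ℝ (ζ')² - (1 - 3w²(x)) ζ² dx ≥ 0, with equality if and only if ζ is a scalar multiple of w', where w(x) = tanh(x/√2). -/
/-!
Ground state substitution. The kernel element `φ = w' = (1 - w²)/√2` is positive and its
logarithmic derivative `R = φ'/φ = -√2 w` solves the Riccati equation `R' + R² = -(1 - 3w²)`.
Hence `ζ'² - (1 - 3w²) ζ² = (ζ' - R ζ)² + (R ζ²)'` pointwise. Since `R` is bounded, `R ζ²` and its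
derivative are integrable, so the total derivative integrates to zero and the quadratic form
equals `∫ (ζ' - R ζ)² ≥ 0`. It vanishes iff `ζ' = R ζ` almost everywhere, i.e. iff `ζ / φ` has
almost everywhere vanishing derivative, which (by the fundamental theorem of calculus) forces
`ζ / φ` to be constant.
-/

open Real MeasureTheory Filter

section GroundState

variable {R U φ ζ g g' : ℝ → ℝ} {B C : ℝ}

lemma integrable_mul_deriv_of_integrable_sq (hζ : Continuous ζ)
    (hζ2 : Integrable fun x => ζ x ^ 2) (hζ'2 : Integrable fun x => deriv ζ x ^ 2) :
    Integrable fun x => ζ x * deriv ζ x :=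
  ((memLp_two_iff_integrable_sq hζ.aestronglyMeasurable).2 hζ2).integrable_mul
    ((memLp_two_iff_integrable_sq (measurable_deriv ζ).aestronglyMeasurable).2 hζ'2)

lemma integrable_sq_deriv_sub_mul (hR : Continuous R) (hRC : ∀ x, |R x| ≤ C)
    (hζ : Continuous ζ) (hζ2 : Integrable fun x => ζ x ^ 2)
    (hζ'2 : Integrable fun x => deriv ζ x ^ 2) :
    Integrable fun x => (deriv ζ x - R x * ζ x) ^ 2 := by
  refine ((hζ'2.const_mul 2).add (hζ2.const_mul (2 * C ^ 2))).mono'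
    (((measurable_deriv ζ).sub (hR.measurable.mul hζ.measurable)).pow_const 2).aestronglyMeasurable
    (Eventually.of_forall fun x => ?_)
  have hR2 : R x ^ 2 ≤ C ^ 2 := sq_le_sq' (abs_le.1 (hRC x)).1 (abs_le.1 (hRC x)).2
  rw [norm_of_nonneg (sq_nonneg _), Pi.add_apply]
  nlinarith [sq_nonneg (deriv ζ x + R x * ζ x), mul_le_mul_of_nonneg_right hR2 (sq_nonneg (ζ x))]

theorem integral_sq_deriv_sub_mul_sq_eq (hR : ∀ x, HasDerivAt R (-U x - R x ^ 2) x)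
    (hRC : ∀ x, |R x| ≤ C) (hUB : ∀ x, |U x| ≤ B) (hζ : Differentiable ℝ ζ)
    (hζ2 : Integrable fun x => ζ x ^ 2) (hζ'2 : Integrable fun x => deriv ζ x ^ 2) :
    ∫ x, deriv ζ x ^ 2 - U x * ζ x ^ 2 = ∫ x, (deriv ζ x - R x * ζ x) ^ 2 := by
  have hRc : Continuous R := continuous_iff_continuousAt.2 fun x => (hR x).continuousAt
  have hU : U = fun x => -deriv R x - R x ^ 2 := funext fun x => by linarith [(hR x).deriv]
  have hUm : AEStronglyMeasurable U := by
    rw [hU]; exact ((measurable_deriv R).neg.sub (hRc.measurable.pow_const 2)).aestronglyMeasurable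
  have bdd {f : ℝ → ℝ} {c : ℝ} (hf : AEStronglyMeasurable f) (hfc : ∀ x, |f x| ≤ c)
      {h : ℝ → ℝ} (hh : Integrable h) : Integrable fun x => f x * h x :=
    hh.bdd_mul hf (Eventually.of_forall hfc)
  set D := fun x => (-U x - R x ^ 2) * ζ x ^ 2 + 2 * R x * (ζ x * deriv ζ x)
  have hD : ∀ x, HasDerivAt (fun y => R y * ζ y ^ 2) (D x) x := fun x =>
    ((hR x).mul ((hζ x).hasDerivAt.pow 2)).congr_deriv (by simp only [D, Pi.pow_apply]; ring)
  have hDi : Integrable D := by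
    refine (bdd (hUm.neg.sub (hRc.pow 2).aestronglyMeasurable) (c := B + C ^ 2) ?_ hζ2).add
      (bdd (hRc.const_mul 2).aestronglyMeasurable (c := 2 * C) ?_
        (integrable_mul_deriv_of_integrable_sq hζ.continuous hζ2 hζ'2))
    · intro x
      calc |-U x - R x ^ 2| ≤ |-U x| + |R x ^ 2| := abs_sub _ _
        _ = |U x| + |R x| ^ 2 := by rw [abs_neg, abs_pow]
        _ ≤ B + C ^ 2 := add_le_add (hUB x) (pow_le_pow_left₀ (abs_nonneg _) (hRC x) 2)
    · intro x
      simpa [abs_mul] using mul_le_mul_of_nonneg_left (hRC x) zero_le_two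
  have hQi := integrable_sq_deriv_sub_mul hRc hRC hζ.continuous hζ2 hζ'2
  calc ∫ x, deriv ζ x ^ 2 - U x * ζ x ^ 2
      = ∫ x, (deriv ζ x - R x * ζ x) ^ 2 + D x := integral_congr_ae <|
        Eventually.of_forall fun x => by simp only [D]; ring
    _ = ∫ x, (deriv ζ x - R x * ζ x) ^ 2 := by
      rw [integral_add hQi hDi, integral_eq_zero_of_hasDerivAt_of_integrable hD hDi
        (bdd hRc.aestronglyMeasurable hRC hζ2), add_zero]

lemma eq_of_hasDerivAt_of_ae_eq_zero (hg : ∀ x, HasDerivAt g (g' x) x) (hg' : g' =ᵐ[volume] 0)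
    (x y : ℝ) : g x = g y := by
  have hFTC := intervalIntegral.integral_eq_sub_of_hasDerivAt (fun t _ => hg t)
    ((integrable_zero ℝ ℝ volume).congr hg'.symm).intervalIntegrable (a := y) (b := x)
  have hzero : ∫ t in y..x, g' t = 0 := by
    rw [intervalIntegral.integral_congr_ae (hg'.mono fun t ht _ => ht)]
    simp
  linarith

lemma exists_eq_const_mul_of_deriv_ae_eq (hφ : ∀ x, HasDerivAt φ (R x * φ x) x)
    (hφ0 : ∀ x, φ x ≠ 0) (hζ : Differentiable ℝ ζ) (h : ∀ᵐ x, deriv ζ x = R x * ζ x) :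
    ∃ c, ∀ x, ζ x = c * φ x := by
  have hq : ∀ x, HasDerivAt (fun y => ζ y / φ y)
      ((deriv ζ x - R x * ζ x) / φ x) x := fun x =>
    ((hζ x).hasDerivAt.div (hφ x) (hφ0 x)).congr_deriv (by field_simp [hφ0 x])
  refine ⟨ζ 0 / φ 0, fun x => ?_⟩
  rw [← eq_of_hasDerivAt_of_ae_eq_zero hq (h.mono fun y hy => by simp [hy]) x 0,
    div_mul_cancel₀ _ (hφ0 x)]

theorem integral_sq_deriv_sub_mul_sq_nonneg (hR : ∀ x, HasDerivAt R (-U x - R x ^ 2) x)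
    (hRC : ∀ x, |R x| ≤ C) (hUB : ∀ x, |U x| ≤ B) (hζ : Differentiable ℝ ζ)
    (hζ2 : Integrable fun x => ζ x ^ 2) (hζ'2 : Integrable fun x => deriv ζ x ^ 2) :
    0 ≤ ∫ x, deriv ζ x ^ 2 - U x * ζ x ^ 2 := by
  rw [integral_sq_deriv_sub_mul_sq_eq hR hRC hUB hζ hζ2 hζ'2]
  exact integral_nonneg fun x => sq_nonneg _

theorem integral_sq_deriv_sub_mul_sq_eq_zero_iff (hφ : ∀ x, HasDerivAt φ (R x * φ x) x)
    (hφ0 : ∀ x, φ x ≠ 0) (hR : ∀ x, HasDerivAt R (-U x - R x ^ 2) x)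
    (hRC : ∀ x, |R x| ≤ C) (hUB : ∀ x, |U x| ≤ B) (hζ : Differentiable ℝ ζ)
    (hζ2 : Integrable fun x => ζ x ^ 2) (hζ'2 : Integrable fun x => deriv ζ x ^ 2) :
    ∫ x, deriv ζ x ^ 2 - U x * ζ x ^ 2 = 0 ↔ ∃ c, ∀ x, ζ x = c * φ x := by
  have hRc : Continuous R := continuous_iff_continuousAt.2 fun x => (hR x).continuousAt
  rw [integral_sq_deriv_sub_mul_sq_eq hR hRC hUB hζ hζ2 hζ'2, integral_eq_zero_iff_of_nonneg
    (fun x => sq_nonneg _) (integrable_sq_deriv_sub_mul hRc hRC hζ.continuous hζ2 hζ'2)]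
  constructor
  · intro h
    exact exists_eq_const_mul_of_deriv_ae_eq hφ hφ0 hζ
      (h.mono fun x hx => sub_eq_zero.1 (pow_eq_zero_iff two_ne_zero |>.1 hx))
  · rintro ⟨c, hc⟩
    obtain rfl : ζ = fun x => c * φ x := funext hc
    refine Eventually.of_forall fun x => ?_
    simp [((hφ x).const_mul c).deriv]
    ring

end GroundState

theorem Real.hasDerivAt_tanh (x : ℝ) : HasDerivAt tanh (1 - tanh x ^ 2) x := by
  have hc := (cosh_pos x).ne'
  have h := (hasDerivAt_sinh x).div (hasDerivAt_cosh x) hc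
  rw [show sinh / cosh = tanh from funext fun y => (tanh_eq_sinh_div_cosh y).symm] at h
  refine h.congr_deriv ?_
  rw [tanh_eq_sinh_div_cosh]
  field_simp

lemma hasDerivAt_tanh_div_sqrt_two (x : ℝ) :
    HasDerivAt (fun x => tanh (x / √2)) ((1 - tanh (x / √2) ^ 2) / √2) x :=
  ((hasDerivAt_tanh _).comp x ((hasDerivAt_id x).div_const √2)).congr_deriv
    (by simp [div_eq_mul_inv])

section Kink

variable {w : ℝ → ℝ}

lemma hasDerivAt_one_sub_sq_div_sqrt_two (hw : ∀ x, HasDerivAt w ((1 - w x ^ 2) / √2) x)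
    (x : ℝ) :
    HasDerivAt (fun x => (1 - w x ^ 2) / √2) (-√2 * w x * ((1 - w x ^ 2) / √2)) x :=
  ((((hw x).pow 2).const_sub 1).div_const √2).congr_deriv (by
    field_simp
    linear_combination (w x - w x ^ 3) * sq_sqrt (zero_le_two : (0 : ℝ) ≤ 2))

lemma hasDerivAt_neg_sqrt_two_mul (hw : ∀ x, HasDerivAt w ((1 - w x ^ 2) / √2) x) (x : ℝ) :
    HasDerivAt (fun x => -√2 * w x) (-(1 - 3 * w x ^ 2) - (-√2 * w x) ^ 2) x :=
  ((hw x).const_mul (-√2)).congr_deriv (by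
    field_simp
    linear_combination w x ^ 2 * sq_sqrt (zero_le_two : (0 : ℝ) ≤ 2))

end Kink

theorem allen_cahn_quadratic_form_nonneg
    (w : ℝ → ℝ) (hw : ∀ x, w x = Real.tanh (x / Real.sqrt 2)) :
    ∀ ζ : ℝ → ℝ, Differentiable ℝ ζ →
      Integrable (fun x : ℝ => (ζ x) ^ 2) →
      Integrable (fun x : ℝ => (deriv ζ x) ^ 2) →
      (0 ≤ ∫ x : ℝ, (deriv ζ x) ^ 2 - (1 - 3 * (w x) ^ 2) * (ζ x) ^ 2) ∧
      ((∫ x : ℝ, (deriv ζ x) ^ 2 - (1 - 3 * (w x) ^ 2) * (ζ x) ^ 2) = 0 ↔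
        ∃ c : ℝ, ∀ x : ℝ, ζ x = c * deriv w x) := by
  obtain rfl : w = fun x => tanh (x / √2) := funext hw
  intro ζ hζ hζ2 hζ'2
  have hw' := hasDerivAt_tanh_div_sqrt_two
  have hw1 (x : ℝ) : tanh (x / √2) ^ 2 < 1 := tanh_sq_lt_one _
  have hR := hasDerivAt_neg_sqrt_two_mul hw'
  have hRC (x : ℝ) : |-√2 * tanh (x / √2)| ≤ √2 := by
    rw [abs_mul, abs_neg, abs_of_pos (sqrt_pos.2 zero_lt_two)]
    exact mul_le_of_le_one_right (sqrt_nonneg 2) (abs_tanh_lt_one _).le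
  have hUB (x : ℝ) : |1 - 3 * tanh (x / √2) ^ 2| ≤ 2 := by
    rw [abs_le]; constructor <;> nlinarith [hw1 x, sq_nonneg (tanh (x / √2))]
  have hφ0 (x : ℝ) : (1 - tanh (x / √2) ^ 2) / √2 ≠ 0 := by
    have := hw1 x; positivity
  rw [funext fun x => (hw' x).deriv]
  exact ⟨integral_sq_deriv_sub_mul_sq_nonneg hR hRC hUB hζ hζ2 hζ'2,
    integral_sq_deriv_sub_mul_sq_eq_zero_iff (hasDerivAt_one_sub_sq_div_sqrt_two hw') hφ0 hR hRC
      hUB hζ hζ2 hζ'2⟩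
end

section
/- Interaction estimate: for s > 0, ∫_ℝ w'(x + s) w'(x) dx ≤ C (1 + s) e^{-√2 s} for a constant C > 0 independent of s, where w(x) = tanh(x/√2). -/
/-!
Since `1 / cosh² y ≤ 4 e^{-2|y|}`, the profile `w'` is bounded by `2√2 e^{-√2|x|}`. Hence the
overlap integrand is at most `8 e^{-√2 s} e^{-√2 (|x + s| + |x| - s)}`, and the exponent
`|x + s| + |x| - s` vanishes on `[-s, 0]` and equals `2|x|` or `2|x + s|` outside it, so the
integral is at most `8 (s + √2) e^{-√2 s}`.
-/

open Real MeasureTheory Set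

namespace Real

theorem hasDerivAt_tanh_s9 (x : ℝ) : HasDerivAt tanh (cosh x ^ 2)⁻¹ x := by
  have h := (hasDerivAt_sinh x).div (hasDerivAt_cosh x) (cosh_pos x).ne'
  rw [show tanh = sinh / cosh from funext tanh_eq_sinh_div_cosh]
  refine h.congr_deriv ?_
  rw [← sq, ← sq, cosh_sq_sub_sinh_sq, one_div]

theorem inv_cosh_sq_le (x : ℝ) : (cosh x ^ 2)⁻¹ ≤ 4 * exp (-2 * |x|) := by
  have h : exp |x| ≤ 2 * cosh x := by rw [cosh_eq]; linarith [exp_abs_le x]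
  calc (cosh x ^ 2)⁻¹ ≤ (exp |x| ^ 2 / 4)⁻¹ := by
        gcongr; nlinarith [exp_pos |x|]
    _ = 4 * exp (-2 * |x|) := by
        rw [inv_div, div_eq_mul_inv, ← exp_nat_mul, ← exp_neg]; push_cast; ring_nf

end Real

theorem deriv_tanh_div {c : ℝ} (x : ℝ) :
    deriv (fun x => tanh (x / c)) x = (c * cosh (x / c) ^ 2)⁻¹ := by
  refine ((hasDerivAt_tanh_s9 (x / c)).comp x ((hasDerivAt_id x).div_const c)).deriv.trans ?_
  rw [mul_inv, mul_comm]; simp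

theorem deriv_tanh_div_nonneg {c : ℝ} (hc : 0 ≤ c) (x : ℝ) :
    0 ≤ deriv (fun x => tanh (x / c)) x := by
  rw [deriv_tanh_div]; positivity

theorem deriv_tanh_div_le {c : ℝ} (hc : 0 < c) (x : ℝ) :
    deriv (fun x => tanh (x / c)) x ≤ 4 / c * exp (-(2 / c) * |x|) :=
  calc deriv (fun x => tanh (x / c)) x = c⁻¹ * (cosh (x / c) ^ 2)⁻¹ := by
        rw [deriv_tanh_div, mul_inv]
    _ ≤ c⁻¹ * (4 * exp (-2 * |x / c|)) := by gcongr; exact inv_cosh_sq_le _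
    _ = 4 / c * exp (-(2 / c) * |x|) := by rw [abs_div, abs_of_pos hc]; ring_nf

theorem integrable_exp_neg_mul_abs {b : ℝ} (hb : 0 < b) :
    Integrable fun x => exp (-b * |x|) := by
  rw [← integrableOn_univ, ← Iic_union_Ioi (a := 0)]
  refine IntegrableOn.union ?_ ?_
  · refine (integrableOn_exp_mul_Iic hb 0).congr_fun (fun x hx => ?_) measurableSet_Iic
    rw [abs_of_nonpos hx]; ring_nf
  · refine (integrableOn_exp_mul_Ioi (neg_lt_zero.2 hb) 0).congr_fun (fun x hx => ?_)
      measurableSet_Ioi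
    rw [abs_of_pos hx]

theorem integral_exp_neg_mul_abs {b : ℝ} (hb : 0 < b) :
    ∫ x, exp (-b * |x|) = 2 / b := by
  rw [integral_comp_abs (f := fun x => exp (-b * x)), integral_exp_mul_Ioi (neg_lt_zero.2 hb)]
  field_simp
  simp

theorem exp_neg_mul_abs_add_abs_le {a s : ℝ} (hs : 0 ≤ s) (x : ℝ) :
    exp (-a * (|x + s| + |x|)) ≤ exp (-a * s) *
      ((Icc (-s) 0).indicator 1 x + exp (-(2 * a) * |x|) + exp (-(2 * a) * |x + s|)) := by
  have hI : 0 ≤ (Icc (-s) 0).indicator (1 : ℝ → ℝ) x := indicator_nonneg (by simp) x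
  have hx₀ := exp_pos (-(2 * a) * |x|)
  have hxs := exp_pos (-(2 * a) * |x + s|)
  rcases lt_or_ge 0 x with hx | hx
  · have h : exp (-a * (|x + s| + |x|)) = exp (-a * s) * exp (-(2 * a) * |x|) := by
      rw [← exp_add, abs_of_pos (by linarith), abs_of_pos hx]; ring_nf
    rw [h]; gcongr; linarith
  rcases lt_or_ge x (-s) with hxs' | hxs'
  · have h : exp (-a * (|x + s| + |x|)) = exp (-a * s) * exp (-(2 * a) * |x + s|) := by
      rw [← exp_add, abs_of_neg (by linarith), abs_of_neg (by linarith)]; ring_nf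
    rw [h]; gcongr; linarith
  · have h : exp (-a * (|x + s| + |x|)) = exp (-a * s) * 1 := by
      rw [abs_of_nonneg (by linarith), abs_of_nonpos hx]; ring_nf
    rw [h, indicator_of_mem (mem_Icc.2 ⟨hxs', hx⟩), Pi.one_apply]; gcongr; linarith

theorem integral_mul_comp_add_le_of_le_exp {f : ℝ → ℝ} {M a s : ℝ} (ha : 0 < a) (hs : 0 ≤ s)
    (hf₀ : ∀ x, 0 ≤ f x) (hf : ∀ x, f x ≤ M * exp (-a * |x|)) :
    ∫ x, f (x + s) * f x ≤ M ^ 2 * (s + 2 / a) * exp (-a * s) := by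
  set g : ℝ → ℝ := fun x =>
    (Icc (-s) 0).indicator 1 x + exp (-(2 * a) * |x|) + exp (-(2 * a) * |x + s|)
  have hM : 0 ≤ M := by simpa using (hf₀ 0).trans (hf 0)
  have hexp : Integrable fun x => exp (-(2 * a) * |x|) := integrable_exp_neg_mul_abs (by positivity)
  have hIcc : Integrable ((Icc (-s) 0).indicator (1 : ℝ → ℝ)) :=
    (integrable_indicator_iff measurableSet_Icc).2 (integrableOn_const (by simp))
  have hIcc_exp : Integrable fun x => (Icc (-s) 0).indicator 1 x + exp (-(2 * a) * |x|) :=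
    hIcc.add hexp
  have hg : Integrable g := hIcc_exp.add (hexp.comp_add_right s)
  have hg_int : ∫ x, g x = s + 2 / a := by
    rw [integral_add hIcc_exp (hexp.comp_add_right s), integral_add hIcc hexp,
      integral_add_right_eq_self (fun x => exp (-(2 * a) * |x|)),
      integral_indicator_one measurableSet_Icc,
      volume_real_Icc_of_le (by linarith), integral_exp_neg_mul_abs (by positivity)]
    field_simp; ring
  have hpt : ∀ x, f (x + s) * f x ≤ M ^ 2 * exp (-a * s) * g x := fun x =>
    calc f (x + s) * f x ≤ M * exp (-a * |x + s|) * (M * exp (-a * |x|)) :=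
          mul_le_mul (hf _) (hf x) (hf₀ x) (by positivity)
      _ = M ^ 2 * exp (-a * (|x + s| + |x|)) := by rw [mul_add, exp_add]; ring
      _ ≤ M ^ 2 * (exp (-a * s) * g x) := by gcongr; exact exp_neg_mul_abs_add_abs_le hs x
      _ = M ^ 2 * exp (-a * s) * g x := by ring
  calc ∫ x, f (x + s) * f x ≤ ∫ x, M ^ 2 * exp (-a * s) * g x :=
        integral_mono_of_nonneg (.of_forall fun x => mul_nonneg (hf₀ _) (hf₀ x))
          (hg.const_mul _) (.of_forall hpt)
    _ = M ^ 2 * (s + 2 / a) * exp (-a * s) := by rw [integral_const_mul, hg_int]; ring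

theorem allen_cahn_overlap_estimate
    (w : ℝ → ℝ) (hw : ∀ x, w x = Real.tanh (x / Real.sqrt 2)) :
    ∃ C : ℝ, 0 < C ∧
      ∀ s : ℝ, 0 < s →
        (∫ x : ℝ, deriv w (x + s) * deriv w x) ≤
          C * (1 + s) * Real.exp (-(Real.sqrt 2) * s) := by
  obtain rfl : w = fun x => tanh (x / √2) := funext hw
  have hsqrt : (0 : ℝ) < √2 := by positivity
  refine ⟨8 * √2, by positivity, fun s hs => ?_⟩
  have h := integral_mul_comp_add_le_of_le_exp (by positivity) hs.le
    (deriv_tanh_div_nonneg hsqrt.le) (deriv_tanh_div_le hsqrt)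
  simp only [div_pow, sq_sqrt zero_le_two, div_sqrt] at h
  have hconst : 4 ^ 2 / 2 * (s + √2) ≤ 8 * √2 * (1 + s) := by nlinarith [one_lt_sqrt_two]
  exact h.trans (mul_le_mul_of_nonneg_right hconst (exp_pos _).le)
end
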